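/- Let Γ be a finite simple graph with vertex set X. For all x, z ∈ X: (i) 𝔞(x) = 𝔞(z) if and only if z ∈ [x]; (ii) [x] = 𝔞(x) \ ⋃{𝔞(y) : y ∈ 𝔞(x) and 𝔞(y) ⊊ 𝔞(x)}; (iii) if 𝔞(x) = cl({x}) then [x] = [x]⊥, while if cl({x}) ⊊ 𝔞(x) then [x] = [x]◇. -/

import Mathlib

namespace PCG

variable {X : Type*}

/-- The orthogonal complement of a set of vertices: all vertices at distance at
most one from every element of `Y`. -/
def perp (Γ : SimpleGraph X) (Y : Set X) : Set X :=
  {u | ∀ y ∈ Y, u = y ∨ Γ.Adj u y}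

/-- The closure operator `cl(Y) = Y^⊥⊥`. -/
def cl (Γ : SimpleGraph X) (Y : Set X) : Set X :=
  perp Γ (perp Γ Y)

/-- The admissible-set operator `𝔞(Y) = ⋂_{y ∈ Y} (y^⊥ \ {y})^⊥` (with `𝔞(∅) = X`). -/
def aSet (Γ : SimpleGraph X) (Y : Set X) : Set X :=
  ⋂ y ∈ Y, perp Γ (perp Γ {y} \ {y})

/-- A set is admissible if it is `𝔞(Y)` for some `Y`. -/
def IsAdmissible (Γ : SimpleGraph X) (A : Set X) : Prop :=
  ∃ Y : Set X, A = aSet Γ Y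

/-- A set is closed if it equals its closure. -/
def IsClosedSet (Γ : SimpleGraph X) (Y : Set X) : Prop :=
  Y = cl Γ Y

/-- `x` dominates `y` if `x^⊥ ∩ y^⊥ = y^⊥ \ {y}`. -/
def Dominates (Γ : SimpleGraph X) (x y : X) : Prop :=
  perp Γ {x} ∩ perp Γ {y} = perp Γ {y} \ {y}

/-- The set of dominated vertices. -/
def Dom (Γ : SimpleGraph X) : Set X :=
  {y | ∃ x, Dominates Γ x y}

/-- The `∼⊥`-equivalence class of `x`: vertices with the same star as `x`. -/
def perpClass (Γ : SimpleGraph X) (x : X) : Set X :=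
  {y | perp Γ {y} = perp Γ {x}}

/-- The `∼◇`-equivalence class of `x`: vertices with the same link as `x`. -/
def diaClass (Γ : SimpleGraph X) (x : X) : Set X :=
  {y | perp Γ {y} \ {y} = perp Γ {x} \ {x}}

/-- The `∼`-equivalence class `[x]`. -/
def simClass (Γ : SimpleGraph X) (x : X) : Set X :=
  perpClass Γ x ∪ diaClass Γ x

/-- The outer admissible set of `y`. -/
def out (Γ : SimpleGraph X) (y : X) : Set X :=
  {x | Dominates Γ x y ∧ simClass Γ x ≠ simClass Γ y}

/-- `C` is the vertex set of a connected component of the full subgraph of `Γ` on `S`. -/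
def IsCompOf (Γ : SimpleGraph X) (S : Set X) (C : Set X) : Prop :=
  ∃ K : (Γ.induce S).ConnectedComponent, C = Subtype.val '' K.supp

/-- Balanced graphs. -/
def Balanced (Γ : SimpleGraph X) : Prop :=
  ∀ v ∈ Dom Γ, out Γ v = ∅ ∨ ∃ C : Set X, IsCompOf Γ ((perp Γ {v})ᶜ) C ∧ out Γ v ⊆ C

/-- Relators of the partially commutative group: commutators of adjacent vertices. -/
def raagRels (Γ : SimpleGraph X) : Set (FreeGroup X) :=
  {w | ∃ x y : X, Γ.Adj x y ∧
    w = FreeGroup.of x * FreeGroup.of y * (FreeGroup.of x)⁻¹ * (FreeGroup.of y)⁻¹}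

/-- The partially commutative group (right-angled Artin group) of `Γ`. -/
abbrev RAAG (Γ : SimpleGraph X) : Type _ := PresentedGroup (raagRels Γ)

/-- The generator of `RAAG Γ` corresponding to a vertex. -/
def gen (Γ : SimpleGraph X) (x : X) : RAAG Γ := PresentedGroup.of x

/-- The canonical parabolic subgroup generated by a set of vertices. -/
def parab (Γ : SimpleGraph X) (Y : Set X) : Subgroup (RAAG Γ) :=
  Subgroup.closure (gen Γ '' Y)

/-- Conjugate of a subgroup: `H^f = f⁻¹ H f`. -/
def conjBy {G : Type*} [Group G] (H : Subgroup G) (f : G) : Subgroup G :=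
  Subgroup.map (MulAut.conj f⁻¹).toMonoidHom H

/-- Inversions. -/
def InvSet (Γ : SimpleGraph X) : Set (MulAut (RAAG Γ)) :=
  {φ | ∃ x : X, φ (gen Γ x) = (gen Γ x)⁻¹ ∧ ∀ y : X, y ≠ x → φ (gen Γ y) = gen Γ y}

/-- Transvections. -/
def TrSet (Γ : SimpleGraph X) : Set (MulAut (RAAG Γ)) :=
  {φ | ∃ x y : X, y ≠ x ∧
    (φ (gen Γ x) = gen Γ x * gen Γ y ∨ φ (gen Γ x) = (gen Γ y)⁻¹ * gen Γ x) ∧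
    ∀ z : X, z ≠ x → φ (gen Γ z) = gen Γ z}

/-- Elementary conjugating automorphisms. -/
def LInnSet (Γ : SimpleGraph X) : Set (MulAut (RAAG Γ)) :=
  {φ | ∃ (x : X) (C : Set X) (ε : ℤ), (ε = 1 ∨ ε = -1) ∧
    IsCompOf Γ ((perp Γ {x})ᶜ) C ∧
    (∀ u ∈ C, φ (gen Γ u) = (gen Γ x ^ ε)⁻¹ * gen Γ u * gen Γ x ^ ε) ∧
    (∀ u : X, u ∉ C → φ (gen Γ u) = gen Γ u)}

/-- The subgroup `Aut*(G)` generated by inversions, transvections and elementary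
conjugating automorphisms. -/
def AutStar (Γ : SimpleGraph X) : Subgroup (MulAut (RAAG Γ)) :=
  Subgroup.closure (InvSet Γ ∪ TrSet Γ ∪ LInnSet Γ)

/-- Basis-conjugating automorphisms. -/
def IsBasisConj (Γ : SimpleGraph X) (φ : MulAut (RAAG Γ)) : Prop :=
  ∀ x : X, ∃ g : RAAG Γ, φ (gen Γ x) = g⁻¹ * gen Γ x * g

/-- Normal conjugating automorphisms. -/
def IsConjN (Γ : SimpleGraph X) (φ : MulAut (RAAG Γ)) : Prop :=
  IsBasisConj Γ φ ∧
    ∀ x : X, ∃ f : RAAG Γ, ∀ z ∈ aSet Γ {x}, φ (gen Γ z) = f⁻¹ * gen Γ z * f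

/-- Vertex conjugating automorphisms. -/
def IsConjV (Γ : SimpleGraph X) (φ : MulAut (RAAG Γ)) : Prop :=
  IsBasisConj Γ φ ∧
    ∀ x : X, ∃ f : RAAG Γ, ∀ y ∈ simClass Γ x, φ (gen Γ y) = f⁻¹ * gen Γ y * f

/-- Membership in `St(K)`. -/
def IsStK (Γ : SimpleGraph X) (φ : MulAut (RAAG Γ)) : Prop :=
  ∀ A : Set X, IsAdmissible Γ A →
    Subgroup.map φ.toMonoidHom (parab Γ A) = parab Γ A

/-- Membership in `St(L)`. -/
def IsStL (Γ : SimpleGraph X) (φ : MulAut (RAAG Γ)) : Prop :=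
  ∀ A : Set X, IsClosedSet Γ A →
    Subgroup.map φ.toMonoidHom (parab Γ A) = parab Γ A

/-- Membership in `St^conj(K)`. -/
def IsStConjK (Γ : SimpleGraph X) (φ : MulAut (RAAG Γ)) : Prop :=
  ∀ A : Set X, IsAdmissible Γ A →
    ∃ f : RAAG Γ, Subgroup.map φ.toMonoidHom (parab Γ A) = conjBy (parab Γ A) f

/-- Aggregate conjugating automorphisms. -/
def AggrSet (Γ : SimpleGraph X) : Set (MulAut (RAAG Γ)) :=
  {φ | ∃ (x : X) (C : Set X), IsCompOf Γ ({x}ᶜ) C ∧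
    (∀ y ∈ C, φ (gen Γ y) = (gen Γ x)⁻¹ * gen Γ y * gen Γ x) ∧
    (∀ y : X, y ∉ C → φ (gen Γ y) = gen Γ y)}

/-- Elementary singular conjugating automorphisms: those `α_{C,x^ε}` with `C` a singleton. -/
def LInnSSet (Γ : SimpleGraph X) : Set (MulAut (RAAG Γ)) :=
  {φ | ∃ (x y : X) (ε : ℤ), (ε = 1 ∨ ε = -1) ∧
    IsCompOf Γ ((perp Γ {x})ᶜ) {y} ∧
    φ (gen Γ y) = (gen Γ x ^ ε)⁻¹ * gen Γ y * gen Γ x ^ ε ∧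
    ∀ u : X, u ≠ y → φ (gen Γ u) = gen Γ u}

/-- Basic collected conjugating automorphisms. -/
def LInnCSet (Γ : SimpleGraph X) : Set (MulAut (RAAG Γ)) :=
  {φ | ∃ x u : X, Dominates Γ x u ∧
    (∀ v ∈ simClass Γ u \ {x}, φ (gen Γ v) = (gen Γ x)⁻¹ * gen Γ v * gen Γ x) ∧
    (∀ v : X, v ∉ simClass Γ u \ {x} → φ (gen Γ v) = gen Γ v)}

/-- Regular elementary conjugating automorphisms. -/
def LInnRSet (Γ : SimpleGraph X) : Set (MulAut (RAAG Γ)) :=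
  (LInnSet Γ ∩ {φ | IsConjV Γ φ}) \ LInnSSet Γ

/-- Basic vertex conjugating automorphisms. -/
def LInnVSet (Γ : SimpleGraph X) : Set (MulAut (RAAG Γ)) :=
  LInnRSet Γ ∪ LInnCSet Γ

/-- Tame extended elementary conjugating automorphisms. -/
def LInnTSet (Γ : SimpleGraph X) : Set (MulAut (RAAG Γ)) :=
  {φ | ∃ (y : X) (L : Set X) (ε : ℤ), (ε = 1 ∨ ε = -1) ∧
    (∀ v ∈ L, ∃ C : Set X, IsCompOf Γ ((perp Γ {y})ᶜ) C ∧ v ∈ C ∧ C ⊆ L) ∧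
    aSet Γ {y} ∩ L = ∅ ∧
    (∀ u ∈ L, φ (gen Γ u) = (gen Γ y ^ ε)⁻¹ * gen Γ u * gen Γ y ^ ε) ∧
    (∀ u : X, u ∉ L → φ (gen Γ u) = gen Γ u)}

/-- `K`-minimal vertices. -/
def KMin (Γ : SimpleGraph X) (x : X) : Prop :=
  ∀ y : X, aSet Γ {y} ⊆ aSet Γ {x} → aSet Γ {y} = aSet Γ {x}

/-- `L`-minimal vertices. -/
def LMin (Γ : SimpleGraph X) (x : X) : Prop :=
  ∀ y : X, cl Γ {y} ⊆ cl Γ {x} → cl Γ {y} = cl Γ {x}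

end PCG

/-! Two vertices with the same link have the same `𝔞`. Two distinct vertices with the same star
are adjacent, and then `𝔞(x) = cl({x})`: a vertex of `𝔞(x)` is joined or equal to the twin,
hence lies in the common star. Conversely, if each of `x, z` lies in the `𝔞` of the other, they
have the same star when adjacent and the same link otherwise. Since `y ∈ 𝔞(x)` forces
`𝔞(y) ⊆ 𝔞(x)`, the class `[x]` is what remains of `𝔞(x)` after removing the strictly smaller
`𝔞(y)`. -/

namespace PCG

section

variable {X : Type*} (Γ : SimpleGraph X) {x z : X}

lemma mem_perp_singleton {u : X} : u ∈ perp Γ {x} ↔ u = x ∨ Γ.Adj u x := by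
  simp [perp]

lemma perp_anti {Y Z : Set X} (h : Y ⊆ Z) : perp Γ Z ⊆ perp Γ Y :=
  fun _ hu y hy => hu y (h hy)

lemma perp_singleton_diff_self (x : X) : perp Γ {x} \ {x} = Γ.neighborSet x := by
  ext u
  rw [Set.mem_sdiff, mem_perp_singleton, Set.mem_singleton_iff, SimpleGraph.mem_neighborSet]
  constructor
  · rintro ⟨h | h, hne⟩
    exacts [absurd h hne, h.symm]
  · exact fun h => ⟨Or.inr h.symm, h.ne'⟩

lemma aSet_singleton (x : X) : aSet Γ {x} = perp Γ (Γ.neighborSet x) := by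
  simp [aSet, perp_singleton_diff_self]

lemma mem_aSet_singleton {u : X} :
    u ∈ aSet Γ {x} ↔ ∀ w, Γ.Adj x w → u = w ∨ Γ.Adj u w := by
  simp [aSet_singleton, perp]

lemma mem_diaClass : z ∈ diaClass Γ x ↔ Γ.neighborSet z = Γ.neighborSet x := by
  simp [diaClass, perp_singleton_diff_self]

lemma self_mem_aSet (x : X) : x ∈ aSet Γ {x} :=
  (mem_aSet_singleton Γ).2 fun _ h => Or.inr h

lemma cl_subset_perp (x : X) : cl Γ {x} ⊆ perp Γ {x} :=
  perp_anti Γ (Set.singleton_subset_iff.2 ((mem_perp_singleton Γ).2 (Or.inl rfl)))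

lemma cl_subset_aSet (x : X) : cl Γ {x} ⊆ aSet Γ {x} := by
  rw [cl, aSet_singleton, ← perp_singleton_diff_self]
  exact perp_anti Γ Set.sdiff_subset

lemma aSet_subset_aSet (hz : z ∈ aSet Γ {x}) : aSet Γ {z} ⊆ aSet Γ {x} := by
  intro u hu
  rw [mem_aSet_singleton] at hz hu ⊢
  intro w hxw
  rcases hz w hxw with rfl | hzw
  · rcases hu x hxw.symm with rfl | hux
    exacts [Or.inr hxw, (hz u hux.symm).imp Eq.symm SimpleGraph.Adj.symm]
  · exact hu w hzw

lemma adj_of_mem_perpClass (hz : z ∈ perpClass Γ x) (hne : z ≠ x) : Γ.Adj z x := by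
  have hzz : z ∈ perp Γ {z} := (mem_perp_singleton Γ).2 (Or.inl rfl)
  rw [show perp Γ {z} = perp Γ {x} from hz, mem_perp_singleton] at hzz
  exact hzz.resolve_left hne

lemma not_adj_of_mem_diaClass (hz : z ∈ diaClass Γ x) : ¬ Γ.Adj z x := by
  intro hzx
  have hx : x ∈ Γ.neighborSet z := hzx
  rw [(mem_diaClass Γ).1 hz] at hx
  exact Γ.irrefl hx

lemma aSet_eq_cl_of_mem_perpClass (hz : z ∈ perpClass Γ x) (hne : z ≠ x) :
    aSet Γ {x} = cl Γ {x} := by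
  refine Set.Subset.antisymm ?_ (cl_subset_aSet Γ x)
  intro u hu v hv
  rcases (mem_perp_singleton Γ).1 hv with rfl | hvx
  · have huz : u ∈ perp Γ {z} :=
      (mem_perp_singleton Γ).2 ((mem_aSet_singleton Γ).1 hu z (adj_of_mem_perpClass Γ hz hne).symm)
    rwa [show perp Γ {z} = perp Γ {v} from hz, mem_perp_singleton] at huz
  · exact (mem_aSet_singleton Γ).1 hu v hvx.symm

lemma aSet_eq_of_mem_simClass (h : z ∈ simClass Γ x) : aSet Γ {x} = aSet Γ {z} := by
  rcases h with hz | hz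
  · rcases eq_or_ne z x with rfl | hne
    · rfl
    have hx : x ∈ perpClass Γ z := (hz : perp Γ {z} = perp Γ {x}).symm
    rw [aSet_eq_cl_of_mem_perpClass Γ hz hne, aSet_eq_cl_of_mem_perpClass Γ hx hne.symm, cl,
      cl, show perp Γ {z} = perp Γ {x} from hz]
  · rw [aSet_singleton, aSet_singleton, (mem_diaClass Γ).1 hz]

lemma perp_singleton_subset_of_mem_aSet (hxz : Γ.Adj x z) (hx : x ∈ aSet Γ {z}) :
    perp Γ {z} ⊆ perp Γ {x} := by
  intro u hu
  rw [mem_perp_singleton] at hu ⊢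
  rcases hu with rfl | huz
  · exact Or.inr hxz.symm
  · exact ((mem_aSet_singleton Γ).1 hx u huz.symm).imp Eq.symm SimpleGraph.Adj.symm

lemma neighborSet_subset_of_mem_aSet (hxz : ¬ Γ.Adj x z) (hx : x ∈ aSet Γ {z}) :
    Γ.neighborSet z ⊆ Γ.neighborSet x := by
  intro u hzu
  rcases (mem_aSet_singleton Γ).1 hx u hzu with rfl | hxu
  exacts [absurd hzu.symm hxz, hxu]

lemma mem_simClass_of_mem_aSet (hzx : z ∈ aSet Γ {x}) (hxz : x ∈ aSet Γ {z}) :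
    z ∈ simClass Γ x := by
  by_cases hadj : Γ.Adj x z
  · exact Or.inl (Set.Subset.antisymm (perp_singleton_subset_of_mem_aSet Γ hadj hxz)
      (perp_singleton_subset_of_mem_aSet Γ hadj.symm hzx))
  · exact Or.inr ((mem_diaClass Γ).2 (Set.Subset.antisymm
      (neighborSet_subset_of_mem_aSet Γ hadj hxz)
      (neighborSet_subset_of_mem_aSet Γ (mt Γ.adj_symm hadj) hzx)))

lemma aSet_eq_iff_mem_simClass : aSet Γ {x} = aSet Γ {z} ↔ z ∈ simClass Γ x :=
  ⟨fun h => mem_simClass_of_mem_aSet Γ (h ▸ self_mem_aSet Γ z) (h.symm ▸ self_mem_aSet Γ x),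
    aSet_eq_of_mem_simClass Γ⟩

lemma simClass_eq_aSet_diff (x : X) :
    simClass Γ x = aSet Γ {x} \ ⋃ y ∈ {y : X | y ∈ aSet Γ {x} ∧ aSet Γ {y} ⊂ aSet Γ {x}},
      aSet Γ {y} := by
  ext w
  simp only [Set.mem_sdiff, Set.mem_iUnion, Set.mem_ofPred_eq, not_exists]
  constructor
  · intro hw
    have heq := aSet_eq_of_mem_simClass Γ hw
    refine ⟨heq ▸ self_mem_aSet Γ w, fun y ⟨_, hyx⟩ hwy => ?_⟩
    exact hyx.not_subset (heq ▸ aSet_subset_aSet Γ hwy)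
  · rintro ⟨hw, hmin⟩
    have heq : aSet Γ {x} = aSet Γ {w} := by
      by_contra hne
      exact hmin w ⟨hw, aSet_subset_aSet Γ hw, fun h => hne (h.antisymm (aSet_subset_aSet Γ hw))⟩
        (self_mem_aSet Γ w)
    exact (aSet_eq_iff_mem_simClass Γ).1 heq

lemma simClass_eq_perpClass (h : aSet Γ {x} ⊆ cl Γ {x}) : simClass Γ x = perpClass Γ x := by
  refine Set.union_eq_left.2 fun w hw => ?_
  have hwx : w ∈ perp Γ {x} :=
    cl_subset_perp Γ x (h (aSet_eq_of_mem_simClass Γ (Or.inr hw) ▸ self_mem_aSet Γ w))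
  rcases (mem_perp_singleton Γ).1 hwx with rfl | hadj
  exacts [rfl, absurd hadj (not_adj_of_mem_diaClass Γ hw)]

lemma simClass_eq_diaClass (h : aSet Γ {x} ≠ cl Γ {x}) : simClass Γ x = diaClass Γ x := by
  refine Set.union_eq_right.2 fun w hw => ?_
  rcases eq_or_ne w x with rfl | hne
  exacts [rfl, absurd (aSet_eq_cl_of_mem_perpClass Γ hw hne) h]

end

theorem simClass_aSet_general {X : Type*} (Γ : SimpleGraph X) (x z : X) :
    (aSet Γ {x} = aSet Γ {z} ↔ z ∈ simClass Γ x) ∧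
    (simClass Γ x =
      aSet Γ {x} \ ⋃ y ∈ {y : X | y ∈ aSet Γ {x} ∧ aSet Γ {y} ⊂ aSet Γ {x}},
        aSet Γ {y}) ∧
    ((aSet Γ {x} = cl Γ {x} → simClass Γ x = perpClass Γ x) ∧
     (cl Γ {x} ⊂ aSet Γ {x} → simClass Γ x = diaClass Γ x)) :=
  ⟨aSet_eq_iff_mem_simClass Γ, simClass_eq_aSet_diff Γ x,
    fun h => simClass_eq_perpClass Γ h.subset, fun h => simClass_eq_diaClass Γ h.ne'⟩

/-- (i) `𝔞(x) = 𝔞(z)` iff `z ∈ [x]`;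
(ii) `[x] = 𝔞(x) \ ⋃ {𝔞(y) : y ∈ 𝔞(x), 𝔞(y) ⊊ 𝔞(x)}`;
(iii) if `𝔞(x) = cl({x})` then `[x] = [x]⊥`, and if `cl({x}) ⊊ 𝔞(x)` then
`[x] = [x]◇`. -/
theorem simClass_aSet {X : Type*} [Fintype X] (Γ : SimpleGraph X) (x z : X) :
    (aSet Γ {x} = aSet Γ {z} ↔ z ∈ simClass Γ x) ∧
    (simClass Γ x =
      aSet Γ {x} \ ⋃ y ∈ {y : X | y ∈ aSet Γ {x} ∧ aSet Γ {y} ⊂ aSet Γ {x}},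
        aSet Γ {y}) ∧
    ((aSet Γ {x} = cl Γ {x} → simClass Γ x = perpClass Γ x) ∧
     (cl Γ {x} ⊂ aSet Γ {x} → simClass Γ x = diaClass Γ x)) :=
  simClass_aSet_general Γ x z

end PCG
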